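/- arXiv:math/0306092 — 2 statements merged into one kernel-verified Lean document; each statement's English description precedes it below -/
import Mathlib

section
/- Let n ≥ 1 be an integer, h ≠ 0 a real number, and P a real polynomial of degree at most 2n. Then P″(0) = (1/h²) ∑_{m=1}^{n} α_m^{(2)}(n) · (P(mh) − 2P(0) + P(−mh)). -/
/-!
The weights are Lagrange interpolation weights in the variable `y = x²`: for the nodes
`1², …, n²` the Lagrange basis polynomial of `m²` takes the value `1 / π_m(n)` at `0`, so
`∑ₘ q(m²) / π_m(n) = q(0)` for every `q` of degree `< n`. The symmetric second difference
`P(mh) - 2P(0) + P(-mh)` kills the odd and constant monomials of `P` and turns `x^(2i)` into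
`2 h^(2i) m² (m²)^(i-1)`; after dividing by `m²` this is a polynomial in `m²` of degree `< n`,
and evaluating it at `0` leaves exactly the `x²` term, `h² P″(0)`.
-/

open Finset Polynomial

/-- `π_m(n) = ∏_{k=1, k ≠ m}^{n} (1 - m²/k²)`. -/
noncomputable def pim (n m : ℕ) : ℝ :=
  ∏ k ∈ (Finset.Icc 1 n).erase m, (1 - (m : ℝ) ^ 2 / (k : ℝ) ^ 2)

/-- `α_m^{(2)}(n) = 1 / (m² · π_m(n))`. -/
noncomputable def alpha2 (n m : ℕ) : ℝ := 1 / ((m : ℝ) ^ 2 * pim n m)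

lemma injective_natCast_sq : Function.Injective fun k : ℕ => (k : ℝ) ^ 2 := fun a b hab => by
  exact_mod_cast (pow_left_inj₀ (Nat.cast_nonneg a) (Nat.cast_nonneg b) two_ne_zero).mp hab

lemma eval_zero_lagrange_basis_sq (n m : ℕ) :
    (Lagrange.basis (Icc 1 n) (fun k : ℕ => (k : ℝ) ^ 2) m).eval 0 = (pim n m)⁻¹ := by
  rw [Lagrange.basis, eval_prod, pim, ← prod_inv_distrib]
  refine prod_congr rfl fun k hk => ?_
  obtain ⟨hkm, hk⟩ := mem_erase.mp hk
  have hk0 : (k : ℝ) ≠ 0 := by have := (mem_Icc.mp hk).1; positivity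
  have hsq : (k : ℝ) ^ 2 - (m : ℝ) ^ 2 ≠ 0 :=
    sub_ne_zero.mpr fun h => hkm (injective_natCast_sq h)
  simp only [Lagrange.basisDivisor, eval_mul, eval_C, eval_sub, eval_X, zero_sub]
  rw [one_sub_div (pow_ne_zero 2 hk0), inv_div, ← neg_sub, inv_neg]
  field_simp

lemma sum_eval_sq_div_pim {n : ℕ} {p : ℝ[X]} (hp : p.degree < n) :
    ∑ m ∈ Icc 1 n, p.eval ((m : ℝ) ^ 2) / pim n m = p.eval 0 := by
  have hcard : (#(Icc 1 n) : WithBot ℕ) = n := by simp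
  conv_rhs => rw [Lagrange.eq_interpolate (f := p) injective_natCast_sq.injOn (hcard ▸ hp)]
  rw [Lagrange.interpolate_apply, eval_finsetSum]
  refine sum_congr rfl fun m _ => ?_
  rw [eval_mul, eval_C, eval_zero_lagrange_basis_sq n m, div_eq_mul_inv]

lemma sum_alpha2_mul_pow_two_mul {n i : ℕ} (hi : 1 ≤ i) (hin : i ≤ n) :
    ∑ m ∈ Icc 1 n, alpha2 n m * (m : ℝ) ^ (2 * i) = if i = 1 then 1 else 0 := by
  have hdeg : (X ^ (i - 1) : ℝ[X]).degree < n := by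
    rw [degree_X_pow]; exact_mod_cast (by omega : i - 1 < n)
  have hX : (X ^ (i - 1) : ℝ[X]).eval 0 = if i = 1 then 1 else 0 := by
    rcases eq_or_ne i 1 with rfl | hi1
    · simp
    · simp [hi1, zero_pow (by omega : i - 1 ≠ 0)]
  rw [← hX, ← sum_eval_sq_div_pim hdeg]
  refine sum_congr rfl fun m hm => ?_
  have hm0 : (m : ℝ) ≠ 0 := by have := (mem_Icc.mp hm).1; positivity
  have hpow : (m : ℝ) ^ (2 * i) = (m : ℝ) ^ 2 * ((m : ℝ) ^ 2) ^ (i - 1) := by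
    rw [← pow_mul, ← pow_add]; congr 1; omega
  rw [eval_pow, eval_X, alpha2, hpow]
  field_simp

lemma sum_alpha2_mul_central_diff_pow {n j : ℕ} (hj : j ≤ 2 * n) (x : ℝ) :
    ∑ m ∈ Icc 1 n, alpha2 n m * ((m * x) ^ j - 2 * 0 ^ j + (-(m * x)) ^ j) =
      if j = 2 then 2 * x ^ 2 else 0 := by
  rcases Nat.even_or_odd' j with ⟨i, rfl | rfl⟩
  · rcases Nat.eq_zero_or_pos i with rfl | hi
    · norm_num
    · calc _ = 2 * x ^ (2 * i) * ∑ m ∈ Icc 1 n, alpha2 n m * (m : ℝ) ^ (2 * i) := by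
            rw [mul_sum]
            refine sum_congr rfl fun m _ => ?_
            rw [(even_two_mul i).neg_pow, zero_pow (by omega), mul_pow]
            ring
        _ = _ := by
            rw [sum_alpha2_mul_pow_two_mul hi (by omega)]
            rcases eq_or_ne i 1 with rfl | hi1
            · simp
            · simp [hi1, show 2 * i ≠ 2 by omega]
  · rw [if_neg (by omega)]
    refine sum_eq_zero fun m _ => ?_
    rw [(odd_two_mul_add_one i).neg_pow, zero_pow (by omega)]
    ring

lemma sum_alpha2_mul_central_diff_eval {n : ℕ} {P : ℝ[X]} (hP : P.degree ≤ 2 * n) (x : ℝ) :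
    ∑ m ∈ Icc 1 n, alpha2 n m * (P.eval (m * x) - 2 * P.eval 0 + P.eval (-(m * x))) =
      2 * P.coeff 2 * x ^ 2 := by
  have hsupp (j) (hj : j ∈ P.support) : j ≤ 2 * n :=
    (le_natDegree_of_mem_supp j hj).trans (natDegree_le_iff_degree_le.mpr hP)
  simp only [eval_eq_sum, Polynomial.sum_def]
  calc _ = ∑ j ∈ P.support, P.coeff j *
          ∑ m ∈ Icc 1 n, alpha2 n m * ((m * x) ^ j - 2 * 0 ^ j + (-(m * x)) ^ j) := by
        simp only [mul_sum, ← sum_sub_distrib, ← sum_add_distrib]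
        rw [sum_comm]
        refine sum_congr rfl fun j _ => sum_congr rfl fun m _ => ?_
        ring
    _ = ∑ j ∈ P.support, P.coeff j * if j = 2 then 2 * x ^ 2 else 0 :=
        sum_congr rfl fun j hj => by rw [sum_alpha2_mul_central_diff_pow (hsupp j hj)]
    _ = _ := by
        simp only [mul_ite, mul_zero]
        rw [sum_ite_eq']
        split_ifs with h2
        · ring
        · rw [notMem_support_iff.mp h2]; ring

lemma eval_zero_derivative_derivative (P : ℝ[X]) :
    (derivative (derivative P)).eval 0 = 2 * P.coeff 2 := by
  rw [← coeff_zero_eq_eval_zero, coeff_derivative, coeff_derivative]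
  norm_num [mul_comm]

theorem central_diff_second_deriv_exact_general (n : ℕ) (h : ℝ) (hh : h ≠ 0)
    (P : Polynomial ℝ) (hP : P.degree ≤ 2 * n) :
    (Polynomial.derivative (Polynomial.derivative P)).eval 0 =
      (1 / h ^ 2) *
        ∑ m ∈ Finset.Icc 1 n,
          alpha2 n m * (P.eval ((m : ℝ) * h) - 2 * P.eval 0 + P.eval (-((m : ℝ) * h))) := by
  rw [sum_alpha2_mul_central_diff_eval hP, eval_zero_derivative_derivative]
  field_simp

/-- for every `n ≥ 1`, `h ≠ 0` and real polynomial `P` of degree at most `2n`,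
`P″(0) = (1/h²) ∑_{m=1}^{n} α_m^{(2)}(n) (P(mh) - 2P(0) + P(-mh))`. -/
theorem central_diff_second_deriv_exact (n : ℕ) (hn : 1 ≤ n) (h : ℝ) (hh : h ≠ 0)
    (P : Polynomial ℝ) (hP : P.degree ≤ 2 * n) :
    (Polynomial.derivative (Polynomial.derivative P)).eval 0 =
      (1 / h ^ 2) *
        ∑ m ∈ Finset.Icc 1 n,
          alpha2 n m * (P.eval ((m : ℝ) * h) - 2 * P.eval 0 + P.eval (-((m : ℝ) * h))) :=
  central_diff_second_deriv_exact_general n h hh P hP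
end

section
/- For every integer n ≥ 1 and every integer k with 1 ≤ k ≤ n, one has ∑_{m=1}^{n} α_m^{(2)}(n) · m^{2k} = δ_{1k}, where δ_{1k} is the Kronecker delta (equal to 1 if k = 1 and 0 otherwise). -/
/-!
With nodes `x_m = m²` (`1 ≤ m ≤ n`), the Lagrange basis polynomial `L_m` satisfies
`L_m(0) = ∏_{j ≠ m} x_j / (x_j - x_m) = 1 / π_m(n)`, so `α_m^{(2)}(n) m^{2k} = x_m^{k-1} L_m(0)`.
The sum is therefore the interpolant of `X^{k-1}` evaluated at `0`; since `k - 1 < n`, this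
interpolant is `X^{k-1}` itself, whose value at `0` is `δ_{1k}`.
-/

open Finset

open Polynomial

namespace Lagrange

variable {F ι : Type*} [Field F] [DecidableEq ι] {s : Finset ι} {v : ι → F}

theorem eval_eq_sum_eval_mul_eval_basis (hvs : Set.InjOn v s) {p : F[X]} (hp : p.degree < #s)
    (x : F) : p.eval x = ∑ i ∈ s, p.eval (v i) * (Lagrange.basis s v i).eval x := by
  conv_lhs => rw [eq_interpolate hvs hp]
  simp only [interpolate_apply, eval_finsetSum, eval_mul, eval_C]

theorem eval_basis_zero {i : ι} (hv : ∀ j ∈ s.erase i, v j ≠ 0) :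
    (Lagrange.basis s v i).eval 0 = (∏ j ∈ s.erase i, (1 - v i / v j))⁻¹ := by
  rw [Lagrange.basis, eval_prod, ← prod_inv_distrib]
  refine prod_congr rfl fun j hj => ?_
  rw [basisDivisor, eval_mul, eval_C, eval_sub, eval_X, eval_C, one_sub_div (hv j hj), inv_div,
    zero_sub, mul_neg, ← neg_mul, ← inv_neg, neg_sub, inv_mul_eq_div]

end Lagrange

theorem natCast_sq_injective : Function.Injective fun j : ℕ => (j : ℝ) ^ 2 := by
  intro a b h
  simpa using h

theorem alpha2_mul_pow {n m k : ℕ} (hm : m ≠ 0) (hk : 1 ≤ k) :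
    alpha2 n m * (m : ℝ) ^ (2 * k) = ((m : ℝ) ^ 2) ^ (k - 1) * (pim n m)⁻¹ := by
  obtain ⟨k, rfl⟩ := Nat.exists_eq_add_of_le' hk
  have : (m : ℝ) ^ 2 ≠ 0 := by positivity
  rw [alpha2, Nat.add_sub_cancel, mul_add_one, pow_add, pow_mul, one_div, mul_inv]
  field_simp

theorem alpha2_orthogonality_general (n : ℕ) (k : ℕ) (hk1 : 1 ≤ k) (hkn : k ≤ n) :
    ∑ m ∈ Finset.Icc 1 n, alpha2 n m * (m : ℝ) ^ (2 * k) =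
      if k = 1 then 1 else 0 := by
  set v : ℕ → ℝ := fun j => (j : ℝ) ^ 2
  have hdeg : ((X : ℝ[X]) ^ (k - 1)).degree < #(Icc 1 n) := by
    rw [degree_X_pow, Nat.card_Icc]
    exact_mod_cast (by omega : k - 1 < n + 1 - 1)
  calc ∑ m ∈ Icc 1 n, alpha2 n m * (m : ℝ) ^ (2 * k)
      = ∑ m ∈ Icc 1 n,
          (X ^ (k - 1) : ℝ[X]).eval (v m) * (Lagrange.basis (Icc 1 n) v m).eval 0 := by
        refine sum_congr rfl fun m hm => ?_
        have hm0 : m ≠ 0 := by grind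
        rw [alpha2_mul_pow hm0 hk1, eval_pow, eval_X, Lagrange.eval_basis_zero, pim]
        intro j hj
        have : j ≠ 0 := by grind
        positivity
    _ = (X ^ (k - 1) : ℝ[X]).eval 0 :=
        (Lagrange.eval_eq_sum_eval_mul_eval_basis natCast_sq_injective.injOn hdeg 0).symm
    _ = if k = 1 then 1 else 0 := by
        rw [eval_pow, eval_X, zero_pow_eq]
        exact if_congr (by omega) rfl rfl

/-- for every `n ≥ 1` and every `1 ≤ k ≤ n`,
`∑_{m=1}^{n} α_m^{(2)}(n) m^(2k) = δ_{1k}`. -/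
theorem alpha2_orthogonality (n : ℕ) (hn : 1 ≤ n) (k : ℕ) (hk1 : 1 ≤ k) (hkn : k ≤ n) :
    ∑ m ∈ Finset.Icc 1 n, alpha2 n m * (m : ℝ) ^ (2 * k) =
      if k = 1 then 1 else 0 :=
  alpha2_orthogonality_general n k hk1 hkn
end
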